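/- arXiv:2501.01941 — 2 statements merged into one kernel-verified Lean document; each statement's English description precedes it below -/
import Mathlib

section
/- For smooth functions g₁, g₂ : ℝ → ℝ, the vector fields Y(g) = g(t)∂_x - (x/2)(g'(t)(v∂_u - u∂_v) + g''(t)∂_w) satisfy [Y(g₁), Y(g₂)] = W((1/2)(g₁'g₂ - g₁g₂')), where W(m) = m(t)(v∂_u - u∂_v) + m'(t)∂_w. -/
/-- Coordinates on ℝ⁷: indices 0..6 ↦ (t,x,y,z,u,v,w). -/
abbrev R7 := Fin 7 → ℝ

/-- Lie bracket of vector fields on ℝ⁷ (in coefficient form). -/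
noncomputable def lieBracket (V W : R7 → R7) : R7 → R7 :=
  fun p => fderiv ℝ W p (V p) - fderiv ℝ V p (W p)

/-- Y(g) = g(t)∂_x - (x/2)[g'(t)(v∂_u - u∂_v) + g''(t)∂_w]. -/
noncomputable def Yfield (g : ℝ → ℝ) : R7 → R7 :=
  fun p => ![0, g (p 0), 0, 0,
    -(p 1 / 2) * deriv g (p 0) * p 5,
    (p 1 / 2) * deriv g (p 0) * p 4,
    -(p 1 / 2) * deriv (deriv g) (p 0)]

/-- W(m) = m(t)(v∂_u - u∂_v) + m'(t)∂_w. -/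
noncomputable def Wfield (m : ℝ → ℝ) : R7 → R7 :=
  fun p => ![0, 0, 0, 0, m (p 0) * p 5, -(m (p 0)) * p 4, deriv m (p 0)]

lemma hasFDerivAt_proj (i : Fin 7) (p : R7) :
    HasFDerivAt (fun q : R7 => q i) (ContinuousLinearMap.proj i : R7 →L[ℝ] ℝ) p :=
  (ContinuousLinearMap.proj i : R7 →L[ℝ] ℝ).hasFDerivAt

lemma hasFDerivAt_comp0 (h : ℝ → ℝ) (hh : Differentiable ℝ h) (p : R7) :
    HasFDerivAt (fun q : R7 => h (q 0))
      (deriv h (p 0) • (ContinuousLinearMap.proj 0 : R7 →L[ℝ] ℝ)) p :=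
  ((hh (p 0)).hasDerivAt).comp_hasFDerivAt p (hasFDerivAt_proj 0 p)

lemma fd_comp0 (h : ℝ → ℝ) (hh : Differentiable ℝ h) (p v : R7) :
    fderiv ℝ (fun q : R7 => h (q 0)) p v = deriv h (p 0) * v 0 := by
  rw [(hasFDerivAt_comp0 h hh p).fderiv]; simp

lemma fd_triple (h : ℝ → ℝ) (hh : Differentiable ℝ h) (j : Fin 7) (p v : R7) :
    fderiv ℝ (fun q : R7 => q 1 * h (q 0) * q j) p v
      = v 1 * h (p 0) * p j + p 1 * (deriv h (p 0) * v 0) * p j + p 1 * h (p 0) * v j := by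
  rw [HasFDerivAt.fderiv (f := fun q : R7 => q 1 * h (q 0) * q j) (((hasFDerivAt_proj 1 p).mul (hasFDerivAt_comp0 h hh p)).mul (hasFDerivAt_proj j p))]
  simp; ring

lemma fd_pair (h : ℝ → ℝ) (hh : Differentiable ℝ h) (p v : R7) :
    fderiv ℝ (fun q : R7 => q 1 * h (q 0)) p v
      = v 1 * h (p 0) + p 1 * (deriv h (p 0) * v 0) := by
  rw [HasFDerivAt.fderiv (f := fun q : R7 => q 1 * h (q 0)) ((hasFDerivAt_proj 1 p).mul (hasFDerivAt_comp0 h hh p))]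
  simp; ring

lemma fd_ctriple (h : ℝ → ℝ) (hh : Differentiable ℝ h) (j : Fin 7) (c : ℝ) (p v : R7) :
    fderiv ℝ (fun q : R7 => c * (q 1 * h (q 0) * q j)) p v
      = c * (v 1 * h (p 0) * p j + p 1 * (deriv h (p 0) * v 0) * p j + p 1 * h (p 0) * v j) := by
  rw [fderiv_const_mul (a := fun q : R7 => q 1 * h (q 0) * q j) ((((hasFDerivAt_proj 1 p).mul (hasFDerivAt_comp0 h hh p)).mul
    (hasFDerivAt_proj j p)).differentiableAt)]
  simp [fd_triple h hh j p v]

lemma fd_cpair (h : ℝ → ℝ) (hh : Differentiable ℝ h) (c : ℝ) (p v : R7) :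
    fderiv ℝ (fun q : R7 => c * (q 1 * h (q 0))) p v
      = c * (v 1 * h (p 0) + p 1 * (deriv h (p 0) * v 0)) := by
  rw [fderiv_const_mul (a := fun q : R7 => q 1 * h (q 0)) (((hasFDerivAt_proj 1 p).mul (hasFDerivAt_comp0 h hh p)).differentiableAt)]
  simp [fd_pair h hh p v]

lemma fd_Y (g : ℝ → ℝ) (hg : ContDiff ℝ (⊤ : ℕ∞) g) (p v : R7) :
    fderiv ℝ (Yfield g) p v =
      ![0, deriv g (p 0) * v 0, 0, 0,
        -(1/2) * (v 1 * deriv g (p 0) * p 5 + p 1 * (deriv (deriv g) (p 0) * v 0) * p 5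
          + p 1 * deriv g (p 0) * v 5),
        (1/2) * (v 1 * deriv g (p 0) * p 4 + p 1 * (deriv (deriv g) (p 0) * v 0) * p 4
          + p 1 * deriv g (p 0) * v 4),
        -(1/2) * (v 1 * deriv (deriv g) (p 0) + p 1 * (deriv (deriv (deriv g)) (p 0) * v 0))] := by
  have hgi : ContDiff ℝ ((⊤ : ℕ∞) : WithTop ℕ∞) g := hg.of_le (by simp)
  have hg' : ContDiff ℝ ((⊤ : ℕ∞) : WithTop ℕ∞) (deriv g) := (contDiff_infty_iff_deriv.mp hgi).2
  have hg'' : ContDiff ℝ ((⊤ : ℕ∞) : WithTop ℕ∞) (deriv (deriv g)) :=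
    (contDiff_infty_iff_deriv.mp hg').2
  have hd : Differentiable ℝ g := hg.differentiable (by simp)
  have hd' : Differentiable ℝ (deriv g) := hg'.differentiable (by simp)
  have hd'' : Differentiable ℝ (deriv (deriv g)) := hg''.differentiable (by simp)
  have e4 : (fun q : R7 => Yfield g q 4)
      = fun q : R7 => (-(1/2) : ℝ) * (q 1 * deriv g (q 0) * q 5) := by
    funext q
    show -(q 1 / 2) * deriv g (q 0) * q 5 = _
    ring
  have e5 : (fun q : R7 => Yfield g q 5)
      = fun q : R7 => ((1/2) : ℝ) * (q 1 * deriv g (q 0) * q 4) := by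
    funext q
    show (q 1 / 2) * deriv g (q 0) * q 4 = _
    ring
  have e6 : (fun q : R7 => Yfield g q 6)
      = fun q : R7 => (-(1/2) : ℝ) * (q 1 * deriv (deriv g) (q 0)) := by
    funext q
    show -(q 1 / 2) * deriv (deriv g) (q 0) = _
    ring
  have hdiff : ∀ i : Fin 7, DifferentiableAt ℝ (fun q : R7 => Yfield g q i) p := by
    intro i
    fin_cases i
    · exact differentiableAt_const (0:ℝ)
    · exact (hasFDerivAt_comp0 g hd p).differentiableAt
    · exact differentiableAt_const (0:ℝ)
    · exact differentiableAt_const (0:ℝ)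
    · show DifferentiableAt ℝ (fun q : R7 => Yfield g q 4) p
      rw [e4]
      exact ((((hasFDerivAt_proj 1 p).mul (hasFDerivAt_comp0 _ hd' p)).mul
        (hasFDerivAt_proj 5 p)).differentiableAt).const_mul _
    · show DifferentiableAt ℝ (fun q : R7 => Yfield g q 5) p
      rw [e5]
      exact ((((hasFDerivAt_proj 1 p).mul (hasFDerivAt_comp0 _ hd' p)).mul
        (hasFDerivAt_proj 4 p)).differentiableAt).const_mul _
    · show DifferentiableAt ℝ (fun q : R7 => Yfield g q 6) p
      rw [e6]
      exact (((hasFDerivAt_proj 1 p).mul (hasFDerivAt_comp0 _ hd'' p)).differentiableAt).const_mul _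
  funext i
  rw [show fderiv ℝ (Yfield g) p v = (ContinuousLinearMap.pi
      fun i => fderiv ℝ (fun q => Yfield g q i) p) v from by rw [← fderiv_pi hdiff]]
  rw [ContinuousLinearMap.pi_apply]
  fin_cases i
  · show fderiv ℝ (fun _ : R7 => (0:ℝ)) p v = 0
    simp
  · show fderiv ℝ (fun q : R7 => g (q 0)) p v = deriv g (p 0) * v 0
    exact fd_comp0 g hd p v
  · show fderiv ℝ (fun _ : R7 => (0:ℝ)) p v = 0
    simp
  · show fderiv ℝ (fun _ : R7 => (0:ℝ)) p v = 0
    simp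
  · show fderiv ℝ (fun q : R7 => Yfield g q 4) p v
      = -(1/2) * (v 1 * deriv g (p 0) * p 5 + p 1 * (deriv (deriv g) (p 0) * v 0) * p 5
        + p 1 * deriv g (p 0) * v 5)
    rw [e4]; exact fd_ctriple _ hd' 5 _ p v
  · show fderiv ℝ (fun q : R7 => Yfield g q 5) p v
      = (1/2) * (v 1 * deriv g (p 0) * p 4 + p 1 * (deriv (deriv g) (p 0) * v 0) * p 4
        + p 1 * deriv g (p 0) * v 4)
    rw [e5]; exact fd_ctriple _ hd' 4 _ p v
  · show fderiv ℝ (fun q : R7 => Yfield g q 6) p v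
      = -(1/2) * (v 1 * deriv (deriv g) (p 0) + p 1 * (deriv (deriv (deriv g)) (p 0) * v 0))
    rw [e6]; exact fd_cpair _ hd'' _ p v

lemma deriv_m (g₁ g₂ : ℝ → ℝ) (hg₁ : ContDiff ℝ (⊤ : ℕ∞) g₁) (hg₂ : ContDiff ℝ (⊤ : ℕ∞) g₂) (t : ℝ) :
    deriv (fun s => (1 / 2) * (deriv g₁ s * g₂ s - g₁ s * deriv g₂ s)) t
      = (1 / 2) * (deriv (deriv g₁) t * g₂ t - g₁ t * deriv (deriv g₂) t) := by
  have h₁ : ContDiff ℝ ((⊤ : ℕ∞) : WithTop ℕ∞) (deriv g₁) :=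
    (contDiff_infty_iff_deriv.mp (hg₁.of_le (by simp))).2
  have h₂ : ContDiff ℝ ((⊤ : ℕ∞) : WithTop ℕ∞) (deriv g₂) :=
    (contDiff_infty_iff_deriv.mp (hg₂.of_le (by simp))).2
  have d₁ : DifferentiableAt ℝ g₁ t := hg₁.differentiable (by simp) t
  have d₂ : DifferentiableAt ℝ g₂ t := hg₂.differentiable (by simp) t
  have d₁' : DifferentiableAt ℝ (deriv g₁) t := h₁.differentiable (by simp) t
  have d₂' : DifferentiableAt ℝ (deriv g₂) t := h₂.differentiable (by simp) t
  rw [deriv_const_mul (d := fun s => deriv g₁ s * g₂ s - g₁ s * deriv g₂ s) _ ((d₁'.mul d₂).sub (d₁.mul d₂')),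
    show (fun s => deriv g₁ s * g₂ s - g₁ s * deriv g₂ s) = (deriv g₁ * g₂ - g₁ * deriv g₂) from rfl,
    deriv_sub (d₁'.mul d₂) (d₁.mul d₂'), deriv_mul d₁' d₂, deriv_mul d₁ d₂']
  ring

/-- [Y(g₁), Y(g₂)] = W((1/2)(g₁'g₂ - g₁g₂')). -/
theorem stmt_3 (g₁ g₂ : ℝ → ℝ) (hg₁ : ContDiff ℝ (⊤ : ℕ∞) g₁) (hg₂ : ContDiff ℝ (⊤ : ℕ∞) g₂) :
    lieBracket (Yfield g₁) (Yfield g₂) =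
      Wfield (fun t => (1 / 2) * (deriv g₁ t * g₂ t - g₁ t * deriv g₂ t)) := by
  funext p i
  show fderiv ℝ (Yfield g₂) p (Yfield g₁ p) i - fderiv ℝ (Yfield g₁) p (Yfield g₂ p) i = _
  rw [fd_Y g₂ hg₂ p (Yfield g₁ p), fd_Y g₁ hg₁ p (Yfield g₂ p)]
  fin_cases i
  · show (0:ℝ) - 0 = 0; ring
  · show deriv g₂ (p 0) * (0:ℝ) - deriv g₁ (p 0) * 0 = 0; ring
  · show (0:ℝ) - 0 = 0; ring
  · show (0:ℝ) - 0 = 0; ring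
  · show -(1/2) * (g₁ (p 0) * deriv g₂ (p 0) * p 5
        + p 1 * (deriv (deriv g₂) (p 0) * 0) * p 5
        + p 1 * deriv g₂ (p 0) * ((p 1 / 2) * deriv g₁ (p 0) * p 4))
      - (-(1/2) * (g₂ (p 0) * deriv g₁ (p 0) * p 5
        + p 1 * (deriv (deriv g₁) (p 0) * 0) * p 5
        + p 1 * deriv g₁ (p 0) * ((p 1 / 2) * deriv g₂ (p 0) * p 4)))
      = (1 / 2) * (deriv g₁ (p 0) * g₂ (p 0) - g₁ (p 0) * deriv g₂ (p 0)) * p 5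
    ring
  · show (1/2) * (g₁ (p 0) * deriv g₂ (p 0) * p 4
        + p 1 * (deriv (deriv g₂) (p 0) * 0) * p 4
        + p 1 * deriv g₂ (p 0) * (-(p 1 / 2) * deriv g₁ (p 0) * p 5))
      - ((1/2) * (g₂ (p 0) * deriv g₁ (p 0) * p 4
        + p 1 * (deriv (deriv g₁) (p 0) * 0) * p 4
        + p 1 * deriv g₁ (p 0) * (-(p 1 / 2) * deriv g₂ (p 0) * p 5)))
      = -((1 / 2) * (deriv g₁ (p 0) * g₂ (p 0) - g₁ (p 0) * deriv g₂ (p 0))) * p 4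
    ring
  · show -(1/2) * (g₁ (p 0) * deriv (deriv g₂) (p 0)
        + p 1 * (deriv (deriv (deriv g₂)) (p 0) * 0))
      - (-(1/2) * (g₂ (p 0) * deriv (deriv g₁) (p 0)
        + p 1 * (deriv (deriv (deriv g₁)) (p 0) * 0)))
      = deriv (fun t => (1 / 2) * (deriv g₁ t * g₂ t - g₁ t * deriv g₂ t)) (p 0)
    rw [deriv_m g₁ g₂ hg₁ hg₂]
    ring
end

section
/- For L < 0 and J > 0 with discriminant condition K = L²/(4J), the function Ω(η) = -ε√(-L/(2J))·tanh(√(-L/2)(η + η₀)) (ε = ±1) satisfies (Ω')² = JΩ⁴ + LΩ² + L²/(4J). -/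
lemma hasDerivAt_tanh (x : ℝ) :
    HasDerivAt Real.tanh (1 - Real.tanh x ^ 2) x := by
  have hc : Real.cosh x ≠ 0 := (Real.cosh_pos x).ne'
  have h := (Real.hasDerivAt_sinh x).div (Real.hasDerivAt_cosh x) hc
  have heq : (Real.cosh x * Real.cosh x - Real.sinh x * Real.sinh x) / Real.cosh x ^ 2
      = 1 - Real.tanh x ^ 2 := by
    rw [Real.tanh_eq_sinh_div_cosh]
    field_simp
  have : HasDerivAt (fun y => Real.sinh y / Real.cosh y) (1 - Real.tanh x ^ 2) x := heq ▸ h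
  exact this.congr_of_eventuallyEq (Filter.Eventually.of_forall fun y =>
    (Real.tanh_eq_sinh_div_cosh y))

/-- For J > 0, L < 0, ε = ±1,
Ω(η) = -ε√(-L/(2J))·tanh(√(-L/2)(η+η₀)) satisfies (Ω')² = JΩ⁴ + LΩ² + L²/(4J). -/
theorem stmt_15 (J L η₀ ε : ℝ) (hJ : 0 < J) (hL : L < 0) (hε : ε = 1 ∨ ε = -1)
    (Ω : ℝ → ℝ)
    (hΩ : ∀ η, Ω η = -ε * Real.sqrt (-L / (2 * J)) * Real.tanh (Real.sqrt (-L / 2) * (η + η₀))) :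
    ∀ η, (deriv Ω η) ^ 2 = J * (Ω η) ^ 4 + L * (Ω η) ^ 2 + L ^ 2 / (4 * J) := by
  intro η
  set a := Real.sqrt (-L / (2 * J)) with ha
  set b := Real.sqrt (-L / 2) with hb
  have ha2 : a ^ 2 = -L / (2 * J) :=
    Real.sq_sqrt (div_nonneg (by linarith) (by linarith))
  have hb2 : b ^ 2 = -L / 2 :=
    Real.sq_sqrt (div_nonneg (by linarith) (by norm_num))
  set t := Real.tanh (b * (η + η₀)) with ht
  have hd : HasDerivAt Ω (-ε * a * ((1 - t ^ 2) * b)) η := by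
    have h1 : HasDerivAt (fun η : ℝ => b * (η + η₀)) b η := by
      simpa using (((hasDerivAt_id η).add_const η₀).const_mul b)
    have h2 := ((hasDerivAt_tanh (b * (η + η₀))).comp η h1).const_mul (-ε * a)
    exact h2.congr_of_eventuallyEq (Filter.Eventually.of_forall fun y => hΩ y)
  have hε2 : ε ^ 2 = 1 := by rcases hε with h | h <;> rw [h] <;> ring
  have hε4 : ε ^ 4 = 1 := by rcases hε with h | h <;> rw [h] <;> ring
  have hJ' : J ≠ 0 := hJ.ne'
  rw [hd.deriv, hΩ η, ← ht]
  calc (-ε * a * ((1 - t ^ 2) * b)) ^ 2 = ε ^ 2 * a ^ 2 * b ^ 2 * (1 - t ^ 2) ^ 2 := by ring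
    _ = 1 * (-L / (2 * J)) * (-L / 2) * (1 - t ^ 2) ^ 2 := by rw [hε2, ha2, hb2]
    _ = J * (1 * (-L / (2 * J)) ^ 2 * t ^ 4) + L * (1 * (-L / (2 * J)) * t ^ 2) + L ^ 2 / (4 * J) := by
        field_simp; ring
    _ = J * (ε ^ 4 * (a ^ 2) ^ 2 * t ^ 4) + L * (ε ^ 2 * a ^ 2 * t ^ 2) + L ^ 2 / (4 * J) := by
        rw [hε2, hε4, ha2]
    _ = J * (-ε * a * t) ^ 4 + L * (-ε * a * t) ^ 2 + L ^ 2 / (4 * J) := by ring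
end
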